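/- arXiv:2603.05499 — 2 statements merged into one kernel-verified Lean document; each statement's English description precedes it below -/
import Mathlib

section
/- Let ρ₁ = |ψ⟩⟨ψ| be a pure density matrix and ρ₂ a density matrix on ℂ^n. Then the trace distance (1/2)‖ρ₁ − ρ₂‖₁ equals the largest eigenvalue λ₊ of ρ₁ − ρ₂ (and λ₊ ≥ 0). -/
/-!
On the hyperplane `ψ^⊥` the quadratic form of `Δ = |ψ⟩⟨ψ| - ρ₂` is `-⟨x, ρ₂ x⟩ ≤ 0`. If two
orthonormal eigenvectors `vᵢ, vⱼ` of `Δ` had positive eigenvalues, the nonzero combination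
`⟨ψ, vⱼ⟩ vᵢ - ⟨ψ, vᵢ⟩ vⱼ ∈ ψ^⊥` would have positive form, so `Δ` has at most one positive
eigenvalue. As `Tr Δ = 0`, the largest eigenvalue then balances all the others:
`∑ |λᵢ| = 2 λ_max`.
-/

open Matrix BigOperators ComplexOrder

theorem sum_abs_eq_two_mul_iSup_of_sum_eq_zero {ι : Type*} [Fintype ι] {f : ι → ℝ}
    (hsum : ∑ i, f i = 0) (hpos : ∀ i j, i ≠ j → 0 < f i → f j ≤ 0) :
    ∑ i, |f i| = 2 * ⨆ i, f i := by
  cases isEmpty_or_nonempty ι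
  · simp [Real.iSup_of_isEmpty]
  classical
  obtain ⟨i₀, hi₀⟩ := exists_eq_ciSup_of_finite (f := f)
  have hrest : ∀ j ∈ Finset.univ.erase i₀, f j ≤ 0 := fun j hj => by
    by_contra! h
    have hmax : f j ≤ f i₀ := hi₀ ▸ le_ciSup (Finite.bddAbove_range f) j
    exact h.not_ge (hpos i₀ j (Finset.ne_of_mem_erase hj).symm (h.trans_le hmax))
  have hsplit := Finset.add_sum_erase Finset.univ f (Finset.mem_univ i₀)
  have hi₀_nonneg : 0 ≤ f i₀ := by linarith [Finset.sum_nonpos hrest]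
  rw [← Finset.add_sum_erase _ _ (Finset.mem_univ i₀), Finset.sum_congr rfl fun j hj =>
    abs_of_nonpos (hrest j hj), Finset.sum_neg_distrib, ← hi₀, abs_of_nonneg hi₀_nonneg]
  linarith

namespace Matrix

variable {𝕜 ι : Type*} [RCLike 𝕜] [Fintype ι]

theorem PosSemidef.dotProduct_vecMulVec_sub_mulVec_nonpos {B : Matrix ι ι 𝕜} (hB : B.PosSemidef)
    {ψ x : ι → 𝕜} (hx : star ψ ⬝ᵥ x = 0) :
    star x ⬝ᵥ ((vecMulVec ψ (star ψ) - B) *ᵥ x) ≤ 0 := by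
  rw [sub_mulVec, dotProduct_sub, vecMulVec_mulVec, hx]
  simpa using hB.dotProduct_mulVec_nonneg x

namespace IsHermitian

variable [DecidableEq ι] {A : Matrix ι ι 𝕜} (hA : A.IsHermitian)
include hA

theorem star_eigenvectorBasis_dotProduct (i j : ι) :
    star ⇑(hA.eigenvectorBasis i) ⬝ᵥ ⇑(hA.eigenvectorBasis j) = if i = j then 1 else 0 := by
  rw [dotProduct_comm, ← EuclideanSpace.inner_eq_star_dotProduct]
  exact orthonormal_iff_ite.mp hA.eigenvectorBasis.orthonormal i j

theorem dotProduct_mulVec_sub_smul_eigenvectorBasis {i j : ι} (hij : i ≠ j) (c d : 𝕜) :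
    star (c • ⇑(hA.eigenvectorBasis i) - d • ⇑(hA.eigenvectorBasis j)) ⬝ᵥ
      (A *ᵥ (c • ⇑(hA.eigenvectorBasis i) - d • ⇑(hA.eigenvectorBasis j))) =
      ((‖c‖ ^ 2 * hA.eigenvalues i + ‖d‖ ^ 2 * hA.eigenvalues j : ℝ) : 𝕜) := by
  have hv := hA.star_eigenvectorBasis_dotProduct
  simp only [mulVec_sub, mulVec_smul, hA.mulVec_eigenvectorBasis, star_sub, star_smul,
    sub_dotProduct, dotProduct_sub, smul_dotProduct, dotProduct_smul, hv, if_neg hij,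
    if_neg hij.symm, if_true, smul_eq_mul, RCLike.real_smul_eq_coe_mul, mul_one, RCLike.star_def]
  push_cast
  linear_combination
    (hA.eigenvalues i : 𝕜) * RCLike.mul_conj c + (hA.eigenvalues j : 𝕜) * RCLike.mul_conj d

theorem eigenvalues_nonpos_of_forall_dotProduct_mulVec_nonpos {ψ : ι → 𝕜}
    (hψ : ∀ x, star ψ ⬝ᵥ x = 0 → star x ⬝ᵥ (A *ᵥ x) ≤ 0) {i j : ι} (hij : i ≠ j)
    (hi : 0 < hA.eigenvalues i) : hA.eigenvalues j ≤ 0 := by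
  set v := fun k => ⇑(hA.eigenvectorBasis k)
  by_contra! hj
  have hx : star ψ ⬝ᵥ ((star ψ ⬝ᵥ v j) • v i - (star ψ ⬝ᵥ v i) • v j) = 0 := by
    rw [dotProduct_sub, dotProduct_smul, dotProduct_smul, smul_eq_mul, smul_eq_mul, mul_comm,
      sub_self]
  have hform := hψ _ hx
  rw [hA.dotProduct_mulVec_sub_smul_eigenvectorBasis hij, RCLike.ofReal_nonpos] at hform
  have hvj : star ψ ⬝ᵥ v j = 0 := by
    have : ‖star ψ ⬝ᵥ v j‖ ^ 2 * hA.eigenvalues i ≤ 0 := by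
      nlinarith [sq_nonneg ‖star ψ ⬝ᵥ v i‖]
    simpa using nonpos_of_mul_nonpos_left this hi
  have hform_vj := hψ (v j) hvj
  rw [hA.mulVec_eigenvectorBasis, dotProduct_smul, hA.star_eigenvectorBasis_dotProduct, if_pos rfl,
    RCLike.real_smul_eq_coe_mul, mul_one, RCLike.ofReal_nonpos] at hform_vj
  exact hj.not_ge hform_vj

end IsHermitian

end Matrix

theorem stmt4 {n : ℕ} (ρ₂ : Matrix (Fin n) (Fin n) ℂ)
    (hρ₂ : ρ₂.PosSemidef) (htr : ρ₂.trace = 1)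
    (ψ : Fin n → ℂ) (hψ : star ψ ⬝ᵥ ψ = 1)
    (hΔ : (Matrix.vecMulVec ψ (star ψ) - ρ₂).IsHermitian) :
    (1 / 2) * ∑ i, |hΔ.eigenvalues i| = ⨆ i, hΔ.eigenvalues i ∧
      0 ≤ ⨆ i, hΔ.eigenvalues i := by
  have hsum : ∑ i, hΔ.eigenvalues i = 0 := by
    have htrace := hΔ.trace_eq_sum_eigenvalues
    rwa [trace_sub, trace_vecMulVec, dotProduct_comm, hψ, htr, sub_self, ← RCLike.ofReal_sum,
      eq_comm, RCLike.ofReal_eq_zero] at htrace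
  have habs := sum_abs_eq_two_mul_iSup_of_sum_eq_zero hsum fun i j hij =>
    hΔ.eigenvalues_nonpos_of_forall_dotProduct_mulVec_nonpos
      (fun _ hx => hρ₂.dotProduct_vecMulVec_sub_mulVec_nonpos hx) hij
  have hnonneg : 0 ≤ ∑ i, |hΔ.eigenvalues i| := Finset.sum_nonneg fun i _ => abs_nonneg _
  exact ⟨by linarith, by linarith⟩
end

section
/- Let ρ be a density matrix and ψ a unit vector in ℂ^n. Define vectors v_ℓ = (|ψ⟩⟨ψ| − ρ)^ℓ ψ for ℓ ≥ 0. Then for each ℓ there exist real coefficients c_{ℓ,0}, …, c_{ℓ,ℓ} such that v_ℓ = Σ_{k=0}^{ℓ} c_{ℓ,k} ρ^k ψ, satisfying the recursion c_{0,0} = 1, c_{ℓ,0} = Σ_{k=0}^{ℓ−1} c_{ℓ−1,k} ⟨ψ, ρ^k ψ⟩, and c_{ℓ,j} = −c_{ℓ−1,j−1} for 1 ≤ j ≤ ℓ. -/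
open Matrix ComplexOrder

/-- The coefficients `c ℓ k` of the paper, with `r k` standing for the moment `⟨ψ, ρ^k ψ⟩`. -/
def krylovCoeff {R : Type*} [CommRing R] (r : ℕ → R) : ℕ → ℕ → R
  | 0, 0 => 1
  | 0, _ + 1 => 0
  | ℓ + 1, 0 => ∑ k ∈ Finset.range (ℓ + 1), krylovCoeff r ℓ k * r k
  | ℓ + 1, j + 1 => -krylovCoeff r ℓ j

theorem map_krylovCoeff {R S : Type*} [CommRing R] [CommRing S] (f : R →+* S) (r : ℕ → R)
    (ℓ k : ℕ) : f (krylovCoeff r ℓ k) = krylovCoeff (f ∘ r) ℓ k := by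
  induction ℓ generalizing k with
  | zero => cases k <;> simp [krylovCoeff]
  | succ ℓ ih => cases k <;> simp [krylovCoeff, ih]

section

variable {ι R : Type*} [Fintype ι] [DecidableEq ι] [CommRing R]

/-- `ψ φᵀ - A` sends `A^k ψ` to `(φ ⬝ A^k ψ) ψ - A^(k+1) ψ`: each coefficient moves up one power
with a sign change, and the moments collect at `k = 0`. -/
theorem vecMulVec_sub_pow_mulVec (A : Matrix ι ι R) (ψ φ : ι → R) (ℓ : ℕ) :
    ((vecMulVec ψ φ - A) ^ ℓ) *ᵥ ψ =
      ∑ k ∈ Finset.range (ℓ + 1),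
        krylovCoeff (fun k => φ ⬝ᵥ (A ^ k) *ᵥ ψ) ℓ k • (A ^ k) *ᵥ ψ := by
  set r : ℕ → R := fun k => φ ⬝ᵥ (A ^ k) *ᵥ ψ
  have step (k : ℕ) : (vecMulVec ψ φ - A) *ᵥ ((A ^ k) *ᵥ ψ) = r k • ψ - (A ^ (k + 1)) *ᵥ ψ := by
    rw [sub_mulVec, vecMulVec_mulVec, op_smul_eq_smul, mulVec_mulVec, ← pow_succ']
  induction ℓ with
  | zero => simp [krylovCoeff]
  | succ ℓ ih =>
    rw [pow_succ', ← mulVec_mulVec, ih, mulVec_sum]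
    simp only [mulVec_smul, step, smul_sub, Finset.sum_sub_distrib, smul_smul]
    rw [Finset.sum_range_succ' _ (ℓ + 1)]
    simp only [krylovCoeff, neg_smul, Finset.sum_neg_distrib, pow_zero, one_mulVec,
      Finset.sum_smul]
    abel

end

theorem stmt7_general {n : ℕ} (ρ : Matrix (Fin n) (Fin n) ℂ)
    (hρ : ρ.PosSemidef)
    (ψ : Fin n → ℂ) :
    ∃ c : ℕ → ℕ → ℝ,
      c 0 0 = 1 ∧
      (∀ ℓ, c (ℓ + 1) 0 =
        ∑ k ∈ Finset.range (ℓ + 1), c ℓ k * (star ψ ⬝ᵥ (ρ ^ k).mulVec ψ).re) ∧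
      (∀ ℓ j, j ≤ ℓ → c (ℓ + 1) (j + 1) = -c ℓ j) ∧
      (∀ ℓ, ((Matrix.vecMulVec ψ (star ψ) - ρ) ^ ℓ).mulVec ψ =
        ∑ k ∈ Finset.range (ℓ + 1), (c ℓ k : ℂ) • (ρ ^ k).mulVec ψ) := by
  set r : ℕ → ℝ := fun k => (star ψ ⬝ᵥ (ρ ^ k).mulVec ψ).re
  have moment_real : Complex.ofRealHom ∘ r = fun k => star ψ ⬝ᵥ (ρ ^ k).mulVec ψ := by
    funext k
    exact Complex.ext rfl ((hρ.1.pow k).im_star_dotProduct_mulVec_self ψ).symm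
  refine ⟨krylovCoeff r, rfl, fun ℓ => rfl, fun ℓ j _ => rfl, fun ℓ => ?_⟩
  simp only [vecMulVec_sub_pow_mulVec, ← moment_real, ← map_krylovCoeff]
  rfl

theorem stmt7 {n : ℕ} (ρ : Matrix (Fin n) (Fin n) ℂ)
    (hρ : ρ.PosSemidef) (htr : ρ.trace = 1)
    (ψ : Fin n → ℂ) (hψ : star ψ ⬝ᵥ ψ = 1) :
    ∃ c : ℕ → ℕ → ℝ,
      c 0 0 = 1 ∧
      (∀ ℓ, c (ℓ + 1) 0 =
        ∑ k ∈ Finset.range (ℓ + 1), c ℓ k * (star ψ ⬝ᵥ (ρ ^ k).mulVec ψ).re) ∧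
      (∀ ℓ j, j ≤ ℓ → c (ℓ + 1) (j + 1) = -c ℓ j) ∧
      (∀ ℓ, ((Matrix.vecMulVec ψ (star ψ) - ρ) ^ ℓ).mulVec ψ =
        ∑ k ∈ Finset.range (ℓ + 1), (c ℓ k : ℂ) • (ρ ^ k).mulVec ψ) :=
  stmt7_general ρ hρ ψ
end
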